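/- Two finite rigid sequence types are 01-isomorphic (equivalently, related by the coinductive equivalence ≡) if and only if their multiset collapses are equal. -/

import Mathlib

/-- Finite rigid types, with sequence types represented as finite lists of
(track, type) pairs. -/
inductive RType : Type
  | atom : ℕ → RType
  | arr : List (ℕ × RType) → RType → RType

/-- Multiset types, represented: the source of an arrow is a list of types,
understood up to permutation (i.e. as a multiset). -/
inductive MType : Type
  | atom : ℕ → MType
  | arr : List MType → MType → MType

/-- The set of roots (tracks) of a sequence type. -/
def keys (F : List (ℕ × RType)) : Set ℕ := {k | ∃ S, (k, S) ∈ F}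

mutual
/-- The multiset collapse of a rigid type: forget the tracks. -/
def collapseT : RType → MType
  | .atom o => .atom o
  | .arr F T => .arr (collapseF F) (collapseT T)

/-- The collapse of a sequence type: the (multiset of) collapses of its values. -/
def collapseF : List (ℕ × RType) → List MType
  | [] => []
  | (_, S) :: F => collapseT S :: collapseF F
end

mutual
/-- Multiset equality of collapsed types: two (list-represented) multiset types
are equal as multiset types iff they are related by `MEq`. -/
inductive MEq : MType → MType → Prop
  | atom (o : ℕ) : MEq (.atom o) (.atom o)
  | arr {L L' : List MType} {T T' : MType} :
      MEqL L L' → MEq T T' → MEq (.arr L T) (.arr L' T')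

/-- Equality of lists of multiset types up to permutation and `MEq`. -/
inductive MEqL : List MType → List MType → Prop
  | nil : MEqL [] []
  | cons {S S' : MType} {L L₁ L₂ : List MType} :
      MEq S S' → MEqL L (L₁ ++ L₂) → MEqL (S :: L) (L₁ ++ S' :: L₂)
end

/-- Equivalence (01-isomorphism) of rigid types: atoms are equivalent to
themselves, and `F → T ≡ F' → T'` iff there is a bijection `ρ` between the
roots of `F` and `F'` such that corresponding types are equivalent, and
`T ≡ T'`. -/
inductive REquiv : RType → RType → Prop
  | atom (o : ℕ) : REquiv (.atom o) (.atom o)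
  | arr {F F' : List (ℕ × RType)} {T T' : RType} (ρ : ℕ → ℕ)
      (hbij : Set.BijOn ρ (keys F) (keys F'))
      (hval : ∀ k S S', (k, S) ∈ F → (ρ k, S') ∈ F' → REquiv S S')
      (hT : REquiv T T') :
      REquiv (.arr F T) (.arr F' T')

/-- Well-formed rigid types: in every sequence type the tracks are pairwise
distinct and `≥ 2`. -/
inductive WF : RType → Prop
  | atom (o : ℕ) : WF (.atom o)
  | arr {F : List (ℕ × RType)} {T : RType}
      (hnd : (F.map Prod.fst).Nodup)
      (htr : ∀ k S, (k, S) ∈ F → 2 ≤ k)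
      (hF : ∀ k S, (k, S) ∈ F → WF S)
      (hT : WF T) : WF (.arr F T)

section Aux

lemma mem_keys_iff {F : List (ℕ × RType)} {k : ℕ} :
    k ∈ keys F ↔ k ∈ F.map Prod.fst := by
  simp only [keys, Set.mem_setOf_eq, List.mem_map]
  constructor
  · rintro ⟨S, h⟩; exact ⟨(k, S), h, rfl⟩
  · rintro ⟨⟨a, b⟩, h, rfl⟩; exact ⟨b, h⟩

lemma keys_nil : keys ([] : List (ℕ × RType)) = ∅ := by
  ext k; simp [keys]

lemma mem_keys_cons {a : ℕ} {b : RType} {F : List (ℕ × RType)} {k : ℕ} :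
    k ∈ keys ((a, b) :: F) ↔ k = a ∨ k ∈ keys F := by
  constructor
  · rintro ⟨S, hS⟩
    rcases List.mem_cons.1 hS with h | h
    · exact Or.inl (congrArg Prod.fst h)
    · exact Or.inr ⟨S, h⟩
  · rintro (rfl | ⟨S, h⟩)
    · exact ⟨b, List.mem_cons_self⟩
    · exact ⟨S, List.mem_cons_of_mem _ h⟩

lemma keys_cons {p : ℕ × RType} {F : List (ℕ × RType)} :
    keys (p :: F) = insert p.1 (keys F) := by
  obtain ⟨a, b⟩ := p
  ext k
  simp only [Set.mem_insert_iff]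
  exact mem_keys_cons

lemma eq_nil_of_keys_empty {F : List (ℕ × RType)} (h : keys F = ∅) : F = [] := by
  cases F with
  | nil => rfl
  | cons p F =>
    exfalso
    have : p.1 ∈ keys (p :: F) := ⟨p.2, by simp⟩
    rw [h] at this; exact this

lemma nodup_key_unique {F : List (ℕ × RType)} {k : ℕ} {S S' : RType}
    (hnd : (F.map Prod.fst).Nodup) (h : (k, S) ∈ F) (h' : (k, S') ∈ F) : S = S' := by
  induction F with
  | nil => simp at h
  | cons p F ih =>
    simp only [List.map_cons, List.nodup_cons] at hnd
    rcases List.mem_cons.1 h with h1 | h1 <;> rcases List.mem_cons.1 h' with h2 | h2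
    · rw [← h1] at h2
      injection h2 with _ h3
      exact h3.symm
    · exfalso; apply hnd.1; rw [← h1]; exact List.mem_map.2 ⟨(k, S'), h2, rfl⟩
    · exfalso; apply hnd.1; rw [← h2]; exact List.mem_map.2 ⟨(k, S), h1, rfl⟩
    · exact ih hnd.2 h1 h2

lemma middle_perm {α β : Type*} (f : α → β) (A B : List α) (x : α) :
    List.Perm ((A ++ x :: B).map f) (f x :: (A ++ B).map f) := by
  simpa only [List.map_append, List.map_cons] using (List.perm_middle (a := x) (l₁ := A) (l₂ := B)).map f

lemma middle_nodup {A B : List (ℕ × RType)} {x : ℕ × RType}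
    (h : ((A ++ x :: B).map Prod.fst).Nodup) :
    ((A ++ B).map Prod.fst).Nodup ∧ x.1 ∉ keys (A ++ B) := by
  have h2 := (middle_perm Prod.fst A B x).nodup h
  rw [List.nodup_cons] at h2
  exact ⟨h2.2, fun hk => h2.1 (mem_keys_iff.1 hk)⟩

lemma coe_middle {α : Type*} (a : α) (A B : List α) :
    ((A ++ a :: B : List α) : Multiset α) = a ::ₘ ((A ++ B : List α) : Multiset α) := by
  exact Multiset.coe_eq_coe.2 List.perm_middle

lemma collapseF_eq (F : List (ℕ × RType)) :
    collapseF F = F.map (fun p => collapseT p.2) := by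
  induction F with
  | nil => simp [collapseF]
  | cons p F ih => obtain ⟨a, b⟩ := p; simp [collapseF, ih]

end Aux
lemma keys_middle {A B : List (ℕ × RType)} {x : ℕ × RType} :
    keys (A ++ x :: B) = insert x.1 (keys (A ++ B)) := by
  ext k
  simp only [Set.mem_insert_iff, mem_keys_iff]
  rw [(middle_perm Prod.fst A B x).mem_iff]
  exact List.mem_cons
section RelL

lemma rel_of_mEqL : ∀ L L' : List MType, MEqL L L' →
    Multiset.Rel MEq (L : Multiset MType) (L' : Multiset MType) := by
  have key : ∀ n (L L' : List MType), L.length ≤ n → MEqL L L' →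
      Multiset.Rel MEq (L : Multiset MType) (L' : Multiset MType) := by
    intro n
    induction n with
    | zero =>
      intro L L' hlen hm
      cases hm with
      | nil => exact Multiset.Rel.zero
      | cons h1 h2 => simp at hlen
    | succ n ih =>
      intro L L' hlen hm
      cases hm with
      | nil => exact Multiset.Rel.zero
      | @cons S S' L₀ L₁ L₂ h1 h2 =>
        rw [coe_middle]
        have : ((S :: L₀ : List MType) : Multiset MType) = S ::ₘ (L₀ : Multiset MType) := rfl
        rw [this]
        exact Multiset.Rel.cons h1 (ih L₀ (L₁ ++ L₂) (by simpa using hlen) h2)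
  exact fun L L' => key L.length L L' le_rfl

lemma mEqL_of_rel : ∀ L L' : List MType,
    Multiset.Rel MEq (L : Multiset MType) (L' : Multiset MType) → MEqL L L' := by
  have key : ∀ n (L L' : List MType), L.length ≤ n →
      Multiset.Rel MEq (L : Multiset MType) (L' : Multiset MType) → MEqL L L' := by
    intro n
    induction n with
    | zero =>
      intro L L' hlen hr
      match L, hlen with
      | [], _ =>
        have : (L' : Multiset MType) = 0 := (Multiset.rel_zero_left.1 hr)
        rw [Multiset.coe_eq_zero] at this
        rw [this]; exact MEqL.nil
    | succ n ih =>
      intro L L' hlen hr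
      match L with
      | [] =>
        have : (L' : Multiset MType) = 0 := (Multiset.rel_zero_left.1 hr)
        rw [Multiset.coe_eq_zero] at this
        rw [this]; exact MEqL.nil
      | S :: L₀ =>
        have hr' : Multiset.Rel MEq (S ::ₘ (L₀ : Multiset MType)) (L' : Multiset MType) := hr
        rw [Multiset.rel_cons_left] at hr'
        obtain ⟨b, t', hSb, hrest, hL'⟩ := hr'
        have hbL' : b ∈ L' := by
          have : b ∈ (L' : Multiset MType) := by rw [hL']; exact Multiset.mem_cons_self _ _
          simpa using this
        obtain ⟨A, B, rfl⟩ := List.append_of_mem hbL'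
        have ht' : t' = ((A ++ B : List MType) : Multiset MType) := by
          have := hL'.symm.trans (coe_middle b A B)
          exact (Multiset.cons_inj_right b).1 this
        rw [ht'] at hrest
        exact MEqL.cons hSb (ih L₀ (A ++ B) (by simpa using hlen) hrest)
  exact fun L L' => key L.length L L' le_rfl

end RelL
lemma relA : ∀ (F F' : List (ℕ × RType)) (ρ : ℕ → ℕ),
    (F.map Prod.fst).Nodup → (F'.map Prod.fst).Nodup →
    (∀ k S, (k, S) ∈ F → ∀ S', WF S' → REquiv S S' → MEq (collapseT S) (collapseT S')) →
    (∀ k S, (k, S) ∈ F' → WF S) →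
    Set.BijOn ρ (keys F) (keys F') →
    (∀ k S S', (k, S) ∈ F → (ρ k, S') ∈ F' → REquiv S S') →
    Multiset.Rel MEq ((F.map fun p => collapseT p.2 : List MType) : Multiset MType)
      ((F'.map fun p => collapseT p.2 : List MType) : Multiset MType) := by
  intro F
  induction F with
  | nil =>
    intro F' ρ _ _ _ _ hbij _
    have hk' : keys F' = ∅ := by
      have h1 := hbij.2.2
      rw [keys_nil] at h1
      simpa [Set.subset_empty_iff] using h1
    rw [eq_nil_of_keys_empty hk']
    exact Multiset.Rel.zero
  | cons p F₀ ihF =>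
    obtain ⟨k, S⟩ := p
    intro F' ρ hnd hnd' hIH hWF' hbij hval
    have hkmem : k ∈ keys ((k, S) :: F₀) := ⟨S, List.mem_cons_self⟩
    obtain ⟨S', hS'⟩ := hbij.1 hkmem
    obtain ⟨A, B, rfl⟩ := List.append_of_mem hS'
    simp only [List.map_cons, List.nodup_cons] at hnd
    obtain ⟨hknot, hnd₀⟩ := hnd
    have hknotk : k ∉ keys F₀ := fun h => hknot (mem_keys_iff.1 h)
    obtain ⟨hndAB, hρknot⟩ := middle_nodup hnd'
    have hkeysF : keys ((k, S) :: F₀) = insert k (keys F₀) := keys_cons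
    have hkeysF' : keys (A ++ (ρ k, S') :: B) = insert (ρ k) (keys (A ++ B)) :=
      keys_middle
    have hbij' : Set.BijOn ρ (keys F₀) (keys (A ++ B)) := by
      refine ⟨?_, ?_, ?_⟩
      · intro x hx
        have hxF : x ∈ keys ((k, S) :: F₀) := by rw [hkeysF]; exact Set.mem_insert_of_mem _ hx
        have := hbij.1 hxF
        rw [hkeysF'] at this
        rcases this with h | h
        · exfalso
          have : x = k := hbij.2.1 hxF hkmem h
          exact hknotk (this ▸ hx)
        · exact h
      · exact hbij.2.1.mono (by rw [hkeysF]; exact Set.subset_insert _ _)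
      · intro y hy
        have hyF' : y ∈ keys (A ++ (ρ k, S') :: B) := by
          rw [hkeysF']; exact Set.mem_insert_of_mem _ hy
        obtain ⟨x, hx, rfl⟩ := hbij.2.2 hyF'
        rw [hkeysF] at hx
        rcases hx with rfl | hx
        · exact absurd hy hρknot
        · exact ⟨x, hx, rfl⟩
    have hval' : ∀ k₀ S₀ S₁, (k₀, S₀) ∈ F₀ → (ρ k₀, S₁) ∈ A ++ B → REquiv S₀ S₁ := by
      intro k₀ S₀ S₁ h₀ h₁
      refine hval k₀ S₀ S₁ (List.mem_cons_of_mem _ h₀) ?_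
      rcases List.mem_append.1 h₁ with h | h
      · exact List.mem_append_left _ h
      · exact List.mem_append_right _ (List.mem_cons_of_mem _ h)
    have hIH' : ∀ k₀ S₀, (k₀, S₀) ∈ F₀ → ∀ S₁, WF S₁ → REquiv S₀ S₁ → MEq (collapseT S₀) (collapseT S₁) :=
      fun k₀ S₀ h₀ => hIH k₀ S₀ (List.mem_cons_of_mem _ h₀)
    have hWFAB : ∀ k₀ S₀, (k₀, S₀) ∈ A ++ B → WF S₀ := by
      intro k₀ S₀ h
      refine hWF' k₀ S₀ ?_
      rcases List.mem_append.1 h with h | h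
      · exact List.mem_append_left _ h
      · exact List.mem_append_right _ (List.mem_cons_of_mem _ h)
    have hrel := ihF (A ++ B) ρ hnd₀ hndAB hIH' hWFAB hbij' hval'
    have hhead : MEq (collapseT S) (collapseT S') :=
      hIH k S (List.mem_cons_self) S' (hWF' _ _ hS')
        (hval k S S' (List.mem_cons_self) hS')
    have e1 : ((((k, S) :: F₀).map fun p => collapseT p.2 : List MType) : Multiset MType)
        = collapseT S ::ₘ ((F₀.map fun p => collapseT p.2 : List MType) : Multiset MType) := rfl
    have e2 : (((A ++ (ρ k, S') :: B).map fun p => collapseT p.2 : List MType) : Multiset MType)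
        = collapseT S' ::ₘ (((A ++ B).map fun p => collapseT p.2 : List MType) : Multiset MType) := by
      rw [List.map_append, List.map_cons, coe_middle, List.map_append]
    rw [e1, e2]
    exact Multiset.Rel.cons hhead hrel
lemma relB : ∀ (F F' : List (ℕ × RType)),
    (F.map Prod.fst).Nodup → (F'.map Prod.fst).Nodup →
    (∀ k S, (k, S) ∈ F → ∀ S', WF S' → MEq (collapseT S) (collapseT S') → REquiv S S') →
    (∀ k S, (k, S) ∈ F' → WF S) →
    Multiset.Rel MEq ((F.map fun p => collapseT p.2 : List MType) : Multiset MType)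
      ((F'.map fun p => collapseT p.2 : List MType) : Multiset MType) →
    ∃ ρ : ℕ → ℕ, Set.BijOn ρ (keys F) (keys F') ∧
      ∀ k S S', (k, S) ∈ F → (ρ k, S') ∈ F' → REquiv S S' := by
  intro F
  induction F with
  | nil =>
    intro F' _ _ _ _ hrel
    have h0 : ((F'.map fun p => collapseT p.2 : List MType) : Multiset MType) = 0 :=
      Multiset.rel_zero_left.1 hrel
    have hF' : F' = [] := by
      cases F' with
      | nil => rfl
      | cons q F'' => simp at h0
    subst hF'
    refine ⟨id, ?_, ?_⟩
    · rw [keys_nil]; exact Set.bijOn_empty id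
    · intro k S S' h _; simp at h
  | cons p F₀ ihF =>
    obtain ⟨k, S⟩ := p
    intro F' hnd hnd' hIH hWF' hrel
    have e1 : ((((k, S) :: F₀).map fun p => collapseT p.2 : List MType) : Multiset MType)
        = collapseT S ::ₘ ((F₀.map fun p => collapseT p.2 : List MType) : Multiset MType) := rfl
    rw [e1, Multiset.rel_cons_left] at hrel
    obtain ⟨b, t', hSb, hrest, ht⟩ := hrel
    have hbmem : b ∈ F'.map fun p => collapseT p.2 := by
      have : b ∈ ((F'.map fun p => collapseT p.2 : List MType) : Multiset MType) := by
        rw [ht]; exact Multiset.mem_cons_self _ _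
      simpa using this
    obtain ⟨⟨k', S'⟩, hS'mem, rfl⟩ := List.mem_map.1 hbmem
    obtain ⟨A, B, rfl⟩ := List.append_of_mem hS'mem
    have ht' : t' = (((A ++ B).map fun p => collapseT p.2 : List MType) : Multiset MType) := by
      have e2 : (((A ++ (k', S') :: B).map fun p => collapseT p.2 : List MType) : Multiset MType)
          = collapseT S' ::ₘ (((A ++ B).map fun p => collapseT p.2 : List MType) : Multiset MType) := by
        rw [List.map_append, List.map_cons, coe_middle, List.map_append]
      rw [e2] at ht
      exact ((Multiset.cons_inj_right _).1 ht.symm)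
    rw [ht'] at hrest
    simp only [List.map_cons, List.nodup_cons] at hnd
    obtain ⟨hknot, hnd₀⟩ := hnd
    have hknotk : k ∉ keys F₀ := fun h => hknot (mem_keys_iff.1 h)
    obtain ⟨hndAB, hk'not⟩ := middle_nodup hnd'
    have hWFAB : ∀ k₀ S₀, (k₀, S₀) ∈ A ++ B → WF S₀ := by
      intro k₀ S₀ h
      refine hWF' k₀ S₀ ?_
      rcases List.mem_append.1 h with h | h
      · exact List.mem_append_left _ h
      · exact List.mem_append_right _ (List.mem_cons_of_mem _ h)
    have hIH₀ : ∀ k₀ S₀, (k₀, S₀) ∈ F₀ → ∀ S₁, WF S₁ →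
        MEq (collapseT S₀) (collapseT S₁) → REquiv S₀ S₁ :=
      fun k₀ S₀ h₀ => hIH k₀ S₀ (List.mem_cons_of_mem _ h₀)
    obtain ⟨ρ₀, hbij₀, hval₀⟩ := ihF (A ++ B) hnd₀ hndAB hIH₀ hWFAB hrest
    classical
    set ρ : ℕ → ℕ := fun n => if n = k then k' else ρ₀ n with hρ
    have hρk : ρ k = k' := by simp [hρ]
    have hρne : ∀ x, x ≠ k → ρ x = ρ₀ x := by intro x hx; simp [hρ, hx]
    refine ⟨ρ, ?_, ?_⟩
    · rw [keys_cons, keys_middle]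
      refine ⟨?_, ?_, ?_⟩
      · intro x hxmem
        rcases Set.mem_insert_iff.1 hxmem with hxk | hx
        · rw [hxk, hρk]; exact Set.mem_insert _ _
        · have hxk : x ≠ k := fun h => hknotk (h ▸ hx)
          rw [hρne x hxk]
          exact Set.mem_insert_of_mem _ (hbij₀.1 hx)
      · intro x hxmem y hymem heq
        rcases Set.mem_insert_iff.1 hxmem with hxk | hx <;>
          rcases Set.mem_insert_iff.1 hymem with hyk | hy
        · rw [hxk, hyk]
        · exfalso
          have hyk : y ≠ k := fun h => hknotk (h ▸ hy)
          rw [hxk, hρk, hρne y hyk] at heq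
          exact hk'not (heq ▸ hbij₀.1 hy)
        · exfalso
          have hxk' : x ≠ k := fun h => hknotk (h ▸ hx)
          rw [hyk, hρk, hρne x hxk'] at heq
          exact hk'not (heq.symm ▸ hbij₀.1 hx)
        · have hxk : x ≠ k := fun h => hknotk (h ▸ hx)
          have hyk : y ≠ k := fun h => hknotk (h ▸ hy)
          rw [hρne x hxk, hρne y hyk] at heq
          exact hbij₀.2.1 hx hy heq
      · intro y hymem
        rcases Set.mem_insert_iff.1 hymem with hyk | hy
        · exact ⟨k, Set.mem_insert _ _, by rw [hρk, hyk]⟩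
        · obtain ⟨x, hx, rfl⟩ := hbij₀.2.2 hy
          have hxk : x ≠ k := fun h => hknotk (h ▸ hx)
          exact ⟨x, Set.mem_insert_of_mem _ hx, hρne x hxk⟩
    · intro k₀ S₀ S₁ h₀ h₁
      rcases List.mem_cons.1 h₀ with h | h
      · injection h with hk hS
        rw [hk, hρk] at h₁
        have hS₁ : S₁ = S' := nodup_key_unique hnd' h₁ hS'mem
        rw [hS, hS₁]
        exact hIH k S (List.mem_cons_self) S' (hWF' k' S' hS'mem) hSb
      · have hk₀ : k₀ ∈ keys F₀ := ⟨S₀, h⟩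
        have hk₀k : k₀ ≠ k := fun hh => hknotk (hh ▸ hk₀)
        rw [hρne k₀ hk₀k] at h₁
        have hρ₀mem : ρ₀ k₀ ∈ keys (A ++ B) := hbij₀.1 hk₀
        have hρ₀k' : ρ₀ k₀ ≠ k' := fun hh => hk'not (hh ▸ hρ₀mem)
        have h₁' : (ρ₀ k₀, S₁) ∈ A ++ B := by
          rcases List.mem_append.1 h₁ with hh | hh
          · exact List.mem_append_left _ hh
          · rcases List.mem_cons.1 hh with hh | hh
            · exfalso; injection hh with hh1 _; exact hρ₀k' hh1
            · exact List.mem_append_right _ hh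
        exact hval₀ k₀ S₀ S₁ h h₁'
lemma sizeOf_mem' {F : List (ℕ × RType)} {k : ℕ} {S : RType} (h : (k, S) ∈ F) :
    sizeOf S < sizeOf F := by
  have h1 := List.sizeOf_lt_of_mem h
  have h2 : sizeOf (k, S) = 1 + sizeOf k + sizeOf S := rfl
  omega

lemma main_aux : ∀ n (T T' : RType), sizeOf T ≤ n → WF T → WF T' →
    (REquiv T T' ↔ MEq (collapseT T) (collapseT T')) := by
  intro n
  induction n with
  | zero =>
    intro T T' hsz _ _
    exfalso
    cases T <;> simp at hsz
  | succ n ih =>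
    intro T T' hsz hT hT'
    cases T with
    | atom o =>
      cases T' with
      | atom o' =>
        constructor
        · intro h; cases h; exact MEq.atom _
        · intro h; simp only [collapseT] at h; cases h; exact REquiv.atom _
      | arr F' U' =>
        constructor
        · intro h; cases h
        · intro h; simp only [collapseT] at h; cases h
    | arr F U =>
      cases T' with
      | atom o' =>
        constructor
        · intro h; cases h
        · intro h; simp only [collapseT] at h; cases h
      | arr F' U' =>
        cases hT with
        | arr hnd htr hF hU =>
        cases hT' with
        | arr hnd' htr' hF' hU' =>
        have hszU : sizeOf U ≤ n := by
          have harr : sizeOf (RType.arr F U) = 1 + sizeOf F + sizeOf U := by simp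
          rw [harr] at hsz
          omega
        have hszS : ∀ k S, (k, S) ∈ F → sizeOf S ≤ n := by
          intro k S h
          have h1 := sizeOf_mem' h
          have harr : sizeOf (RType.arr F U) = 1 + sizeOf F + sizeOf U := by simp
          rw [harr] at hsz
          omega
        constructor
        · intro h
          cases h with
          | arr ρ hbij hval hUeq =>
            simp only [collapseT]
            refine MEq.arr ?_ ((ih U U' hszU hU hU').1 hUeq)
            rw [collapseF_eq, collapseF_eq]
            exact mEqL_of_rel _ _ (relA F F' ρ hnd hnd'
              (fun k S hm S' hwf hre => (ih S S' (hszS k S hm) (hF k S hm) hwf).1 hre)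
              hF' hbij hval)
        · intro h
          simp only [collapseT] at h
          cases h with
          | arr hL hUeq =>
            rw [collapseF_eq, collapseF_eq] at hL
            obtain ⟨ρ, hbij, hval⟩ := relB F F' hnd hnd'
              (fun k S hm S' hwf hme => (ih S S' (hszS k S hm) (hF k S hm) hwf).2 hme)
              hF' (rel_of_mEqL _ _ hL)
            exact REquiv.arr ρ hbij hval ((ih U U' hszU hU hU').2 hUeq)

/-- Two finite rigid types are 01-isomorphic (≡) iff their multiset collapses
are equal. -/
theorem rEquiv_iff_collapse_eq (T T' : RType) (hT : WF T) (hT' : WF T') :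
    REquiv T T' ↔ MEq (collapseT T) (collapseT T') :=
  main_aux (sizeOf T) T T' le_rfl hT hT'
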